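/- Direct sum formula: for even d and X ∈ T^d(n), Y ∈ T^d(m), det(X ⊕ Y) = det(X) · det(Y), where X ⊕ Y ∈ T^d(n+m) agrees with X on indices all in [n], with Y on indices all in [n+1, n+m], and is 0 otherwise. -/

import Mathlib

open Finset

variable {F : Type*}

section Defs
variable [CommRing F] {d n : ℕ}

/-- Cayley's first hyperdeterminant. -/
def hdet [NeZero d] (T : (Fin d → Fin n) → F) : F :=
  ∑ σ : Fin d → Equiv.Perm (Fin n),
    if σ 0 = 1 then
      ((((∏ ℓ, Equiv.Perm.sign (σ ℓ)) : ℤˣ) : ℤ) : F) * ∏ i, T (fun ℓ => σ ℓ i)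
    else 0

/-- The diagonal identity tensor. -/
def diagT [NeZero d] : (Fin d → Fin n) → F :=
  fun i => if ∀ ℓ, i ℓ = i 0 then 1 else 0

/-- The set of natural numbers `r` such that `T` decomposes as a sum of `r`
tensors from `S`. -/
def Decomps (S : Set ((Fin d → Fin n) → F)) (T : (Fin d → Fin n) → F) : Set ℕ :=
  {r | ∃ c : Fin r → ((Fin d → Fin n) → F), (∀ ℓ, c ℓ ∈ S) ∧ ∑ ℓ, c ℓ = T}

/-- The rank function associated to a set `S` of simple tensors. -/
noncomputable def rankS (S : Set ((Fin d → Fin n) → F)) (T : (Fin d → Fin n) → F) : ℕ :=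
  sInf (Decomps S T)

/-- `T` depends only on the coordinates in `A`. -/
def DependsOnlyOn (A : Set (Fin d)) (T : (Fin d → Fin n) → F) : Prop :=
  ∀ i j : Fin d → Fin n, (∀ ℓ ∈ A, i ℓ = j ℓ) → T i = T j

/-- Simple tensors for the tensor rank: fully decomposable tensors. -/
def tensorSimple : Set ((Fin d → Fin n) → F) :=
  {T | ∃ v : Fin d → (Fin n → F), (∀ ℓ, v ℓ ≠ 0) ∧ T = fun i => ∏ ℓ, v ℓ (i ℓ)}

/-- Simple tensors for the slice rank: decomposable along some coordinate. -/
def sliceSimple : Set ((Fin d → Fin n) → F) :=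
  {T | ∃ (k : Fin d) (v : Fin n → F) (T₁ : (Fin d → Fin n) → F),
    v ≠ 0 ∧ DependsOnlyOn {k}ᶜ T₁ ∧ T = fun i => v (i k) * T₁ i}

/-- Simple tensors for the partition rank: decomposable with respect to a
set partition of the coordinates into two nonempty blocks. -/
def partitionSimple : Set ((Fin d → Fin n) → F) :=
  {T | ∃ (A : Set (Fin d)) (T₁ T₂ : (Fin d → Fin n) → F),
    A.Nonempty ∧ Aᶜ.Nonempty ∧ T₁ ≠ 0 ∧ T₂ ≠ 0 ∧
    DependsOnlyOn A T₁ ∧ DependsOnlyOn Aᶜ T₂ ∧ T = fun i => T₁ i * T₂ i}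

/-- Simple tensors for the odd partition rank: decomposable with respect to a
set partition of the coordinates with one block `B` of odd size not containing
the first coordinate. -/
def oddPartitionSimple [NeZero d] : Set ((Fin d → Fin n) → F) :=
  {T | ∃ (B : Finset (Fin d)) (T₁ T₂ : (Fin d → Fin n) → F),
    Odd B.card ∧ (0 : Fin d) ∉ B ∧ T₁ ≠ 0 ∧ T₂ ≠ 0 ∧
    DependsOnlyOn (↑Bᶜ) T₁ ∧ DependsOnlyOn (↑B) T₂ ∧ T = fun i => T₁ i * T₂ i}

/-- The multilinear product `(A_1, …, A_d) ⬝ T`, expressing a change of basis. -/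
def mprod (A : Fin d → Matrix (Fin n) (Fin n) F) (T : (Fin d → Fin n) → F) :
    (Fin d → Fin n) → F :=
  fun i => ∑ j : Fin d → Fin n, (∏ ℓ, A ℓ (i ℓ) (j ℓ)) * T j

/-- The subtensor of `T` given by index maps `e`. -/
def subT {m : ℕ} (T : (Fin d → Fin n) → F) (e : Fin d → (Fin m → Fin n)) :
    (Fin d → Fin m) → F :=
  fun j => T fun ℓ => e ℓ (j ℓ)

/-- `T` is `k`-null: all `k × ⋯ × k` hyperdeterminant minors of `T` vanish. -/
def kNull [NeZero d] (k : ℕ) (T : (Fin d → Fin n) → F) : Prop :=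
  ∀ e : Fin d → (Fin k → Fin n), (∀ ℓ, StrictMono (e ℓ)) → hdet (subT T e) = 0

end Defs

/-! With the first permutation fixed to the identity, a term of `hdet (directSumT X Y)` can only
be nonzero if every entry `T (i, σ₂ i, …, σ_d i)` has all its indices in one block, i.e. if
every `σ_ℓ` preserves `Fin n` and its complement. Such permutations are exactly the block sums
`σ ⊕ τ` of permutations of `Fin n` and `Fin m`, whose sign is `sign σ * sign τ`, and the
surviving terms factor as a term of `hdet X` times a term of `hdet Y`. -/

open Equiv

def finAddPermHom (n m : ℕ) : Perm (Fin n) × Perm (Fin m) →* Perm (Fin (n + m)) :=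
  finSumFinEquiv.permCongrHom.toMonoidHom.comp (Perm.sumCongrHom (Fin n) (Fin m))

namespace finAddPermHom

variable {n m : ℕ}

lemma injective : Function.Injective (finAddPermHom n m) :=
  finSumFinEquiv.permCongrHom.injective.comp Perm.sumCongrHom_injective

@[simp]
lemma sign_apply (p : Perm (Fin n) × Perm (Fin m)) :
    Perm.sign (finAddPermHom n m p) = Perm.sign p.1 * Perm.sign p.2 := by
  simp [finAddPermHom, permCongrHom_coe]

@[simp]
lemma apply_castAdd (p : Perm (Fin n) × Perm (Fin m)) (a : Fin n) :
    finAddPermHom n m p (Fin.castAdd m a) = Fin.castAdd m (p.1 a) := by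
  simp [finAddPermHom, permCongrHom_coe, ← finSumFinEquiv_apply_left]

@[simp]
lemma apply_natAdd (p : Perm (Fin n) × Perm (Fin m)) (b : Fin m) :
    finAddPermHom n m p (Fin.natAdd n b) = Fin.natAdd n (p.2 b) := by
  simp [finAddPermHom, permCongrHom_coe, ← finSumFinEquiv_apply_right]

lemma mem_range_of_lt_iff (σ : Perm (Fin (n + m)))
    (h : ∀ i : Fin (n + m), (σ i : ℕ) < n ↔ (i : ℕ) < n) :
    σ ∈ (finAddPermHom n m).range := by
  set π : Perm (Fin n ⊕ Fin m) := finSumFinEquiv.permCongr.symm σ with hπ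
  have hπ_inl : Set.MapsTo π (Set.range Sum.inl) (Set.range Sum.inl) := by
    rintro _ ⟨a, rfl⟩
    have hlt : (σ (Fin.castAdd m a) : ℕ) < n := (h _).2 a.isLt
    refine ⟨⟨_, hlt⟩, finSumFinEquiv.injective (Fin.ext ?_)⟩
    simp [hπ]
  obtain ⟨p, hp⟩ := Perm.mem_sumCongrHom_range_of_perm_mapsTo_inl hπ_inl
  refine ⟨p, ?_⟩
  rw [finAddPermHom, MonoidHom.comp_apply, hp, MulEquiv.coe_toMonoidHom, permCongrHom_coe,
    hπ, apply_symm_apply]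

lemma pi_injective {ι : Type*} :
    Function.Injective fun p : (ι → Perm (Fin n)) × (ι → Perm (Fin m)) =>
      fun ℓ => finAddPermHom n m (p.1 ℓ, p.2 ℓ) := by
  intro p q h
  have hpq ℓ := Prod.ext_iff.1 (injective (congrFun h ℓ))
  exact Prod.ext (funext fun ℓ => (hpq ℓ).1) (funext fun ℓ => (hpq ℓ).2)

end finAddPermHom

section DirectSum

variable {d n m : ℕ}

def directSumT [Zero F] (X : (Fin d → Fin n) → F) (Y : (Fin d → Fin m) → F) :
    (Fin d → Fin (n + m)) → F :=
  fun i =>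
    if h : ∀ ℓ, (i ℓ : ℕ) < n then X fun ℓ => ⟨i ℓ, h ℓ⟩
    else if h' : ∀ ℓ, n ≤ (i ℓ : ℕ) then
      Y fun ℓ => ⟨i ℓ - n, Nat.sub_lt_left_of_lt_add (h' ℓ) (i ℓ).isLt⟩
    else 0

variable [Zero F] (X : (Fin d → Fin n) → F) (Y : (Fin d → Fin m) → F)

@[simp]
lemma directSumT_castAdd (i : Fin d → Fin n) :
    directSumT X Y (fun ℓ => Fin.castAdd m (i ℓ)) = X i := by
  simp [directSumT]

@[simp]
lemma directSumT_natAdd [NeZero d] (j : Fin d → Fin m) :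
    directSumT X Y (fun ℓ => Fin.natAdd n (j ℓ)) = Y j := by
  simp [directSumT]

lemma directSumT_eq_zero_of_lt_of_le {i : Fin d → Fin (n + m)} {k k' : Fin d}
    (hk : (i k : ℕ) < n) (hk' : n ≤ (i k' : ℕ)) : directSumT X Y i = 0 := by
  rw [directSumT, dif_neg fun h => (h k').not_ge hk', dif_neg fun h => (h k).not_gt hk]

end DirectSum

section HdetTerm

variable [CommRing F] {d n m : ℕ} [NeZero d]

def hdetTerm (T : (Fin d → Fin n) → F) (σ : Fin d → Perm (Fin n)) : F :=
  if σ 0 = 1 then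
    ((((∏ ℓ, Perm.sign (σ ℓ)) : ℤˣ) : ℤ) : F) * ∏ i, T (fun ℓ => σ ℓ i)
  else 0

lemma hdet_eq_sum_hdetTerm (T : (Fin d → Fin n) → F) : hdet T = ∑ σ, hdetTerm T σ := rfl

variable (X : (Fin d → Fin n) → F) (Y : (Fin d → Fin m) → F)

lemma hdetTerm_directSumT_finAddPermHom (σ : Fin d → Perm (Fin n)) (τ : Fin d → Perm (Fin m)) :
    hdetTerm (directSumT X Y) (fun ℓ => finAddPermHom n m (σ ℓ, τ ℓ)) =
      hdetTerm X σ * hdetTerm Y τ := by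
  have hone : finAddPermHom n m (σ 0, τ 0) = 1 ↔ σ 0 = 1 ∧ τ 0 = 1 := by
    rw [← map_one (finAddPermHom n m), finAddPermHom.injective.eq_iff, Prod.mk_eq_one]
  unfold hdetTerm
  simp only [hone, Fin.prod_univ_add, finAddPermHom.apply_castAdd, finAddPermHom.apply_natAdd,
    directSumT_castAdd, directSumT_natAdd, finAddPermHom.sign_apply, prod_mul_distrib, ite_and]
  split_ifs <;> push_cast <;> ring

lemma hdetTerm_directSumT_eq_zero {σ : Fin d → Perm (Fin (n + m))} {ℓ : Fin d}
    (hℓ : σ ℓ ∉ (finAddPermHom n m).range) : hdetTerm (directSumT X Y) σ = 0 := by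
  refine ite_eq_right_iff.2 fun h0 => ?_
  obtain ⟨i, hi⟩ : ∃ i, ¬((σ ℓ i : ℕ) < n ↔ (i : ℕ) < n) := by
    by_contra! h
    exact hℓ (finAddPermHom.mem_range_of_lt_iff _ h)
  have hσ0 : σ 0 i = i := by rw [h0]; rfl
  refine mul_eq_zero_of_right _ (prod_eq_zero (mem_univ i) ?_)
  rcases lt_or_ge (i : ℕ) n with hin | hin
  · exact directSumT_eq_zero_of_lt_of_le X Y (k := 0) (k' := ℓ) (by rwa [hσ0]) (by omega)
  · exact directSumT_eq_zero_of_lt_of_le X Y (k := ℓ) (k' := 0) (by omega) (by rwa [hσ0])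

end HdetTerm

/-- the direct sum formula `det(X ⊕ Y) = det(X) ⋅ det(Y)` for
even `d`. -/
theorem hdet_direct_sum [Field F] {d n m : ℕ} [NeZero d]
    (X : (Fin d → Fin n) → F) (Y : (Fin d → Fin m) → F) :
    hdet (fun i : Fin d → Fin (n + m) =>
        if h : ∀ ℓ, ((i ℓ) : ℕ) < n then X (fun ℓ => ⟨i ℓ, h ℓ⟩)
        else if h' : ∀ ℓ, n ≤ ((i ℓ) : ℕ) then
          Y (fun ℓ => ⟨(i ℓ : ℕ) - n, by
            have h1 := (i ℓ).isLt; have h2 := h' ℓ; omega⟩)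
        else 0) =
      hdet X * hdet Y := by
  change hdet (directSumT X Y) = _
  simp only [hdet_eq_sum_hdetTerm, Fintype.sum_mul_sum, ← Fintype.sum_prod_type']
  refine (Fintype.sum_of_injective _ finAddPermHom.pi_injective _ _ ?_
    fun p => (hdetTerm_directSumT_finAddPermHom X Y p.1 p.2).symm).symm
  intro σ hσ
  obtain ⟨ℓ, hℓ⟩ : ∃ ℓ, σ ℓ ∉ (finAddPermHom n m).range := by
    by_contra! h
    choose p hp using h
    exact hσ ⟨(fun ℓ => (p ℓ).1, fun ℓ => (p ℓ).2), funext hp⟩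
  exact hdetTerm_directSumT_eq_zero X Y hℓ
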